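/- Let d ≥ 1, let U ⊆ ℝ^d be a nonempty open set (with the Euclidean distance), let φ : U → AdS^{d+1} be a spacelike immersion, and let g : ℝ^{d+2} → ℝ^{d+2} be a linear map with ⟨g(u), g(v)⟩ = ⟨u, v⟩ for all u, v ∈ ℝ^{d+2} and det(g) = 1. If g(φ(p)) = φ(p) for all p ∈ U, then g is the identity map. -/

import Mathlib

/-!
The fixed space `N` of `g` contains the image of `φ`. Along a spacelike immersion into AdS one
has `q (φ p - φ p') ≥ c * dist p p' ^ 2` locally, so a linear map `L` with `q ≤ ‖L‖ ^ 2` on `N`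
is antilipschitz on a neighbourhood in `U`; comparing Hausdorff dimensions, the positive index of
`q` on `N` is at least `d`. Since `φ p` is timelike the negative index is at least `1`, so if
`g ≠ id` then `N` is a hyperplane on which `q` is nondegenerate. Its `q`-orthogonal complement is
then a `g`-invariant line on which `g` acts by `det g = 1`, hence `g = id`.
-/

noncomputable section

/-- The coefficient of the signature-(d,2) quadratic form: +1 on the first `d`
coordinates, −1 on the last two. -/
def eps (d : ℕ) (i : Fin (d + 2)) : ℝ := if (i : ℕ) < d then 1 else -1

/-- The bilinear form ⟨·,·⟩ of signature (d,2) on ℝ^{d+2}. -/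
def bil (d : ℕ) (x y : EuclideanSpace ℝ (Fin (d + 2))) : ℝ := ∑ i, eps d i * x i * y i

/-- The quadratic form q of signature (d,2). -/
def quad (d : ℕ) (x : EuclideanSpace ℝ (Fin (d + 2))) : ℝ := bil d x x
/-- A spacelike immersion from a metric space into AdS^{d+1} = {q = −1}:
a locally Lipschitz map such that, locally, ⟨i(p), i(p')⟩ ≤ −1 − c·d(p,p')². -/
def IsSpacelikeImmersion {H : Type*} [MetricSpace H] (d : ℕ)
    (i : H → EuclideanSpace ℝ (Fin (d + 2))) : Prop :=
  LocallyLipschitz i ∧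
  ∀ p : H, ∃ U ∈ nhds p, ∃ c : ℝ, 0 < c ∧
    ∀ p' ∈ U, ∀ p'' ∈ U, bil d (i p') (i p'') ≤ -1 - c * dist p' p'' ^ 2

open Module Set Topology QuadraticMap QuadraticForm
open scoped NNReal ENNReal

section LinearAlgebra

variable {K V : Type*} [Field K] [AddCommGroup V] [Module K V]

theorem LinearMap.eq_id_of_det_eq_one_of_isCompl_fixedSubmodule [FiniteDimensional K V]
    {g : V →ₗ[K] V} {P : Submodule K V} (hP : IsCompl g.fixedSubmodule P)
    (hgP : ∀ x ∈ P, g x ∈ P) (hrank : finrank K P = 1) (hdet : g.det = 1) :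
    g = LinearMap.id := by
  set e := Submodule.prodEquivOfIsCompl _ _ hP
  have hconj : e.toLinearMap ∘ₗ (id.prodMap (g.restrict hgP)) ∘ₗ e.symm.toLinearMap = g := by
    have : e.toLinearMap ∘ₗ id.prodMap (g.restrict hgP) = g ∘ₗ e.toLinearMap := by
      apply prod_ext
      · ext x; simp [e, mem_fixedSubmodule_iff.mp x.2]
      · ext x; simp [e]
    rw [← comp_assoc, this, comp_assoc, LinearEquiv.comp_coe, e.symm_trans_self]
    rfl
  obtain ⟨c, hc, -⟩ := (g.restrict hgP).existsUnique_eq_smul_id_of_finrank_eq_one hrank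
  have hc1 : c = 1 := by
    rw [← hdet, ← hconj, det_conj, det_prodMap, hc, det_smul, det_id, det_id, hrank]
    simp
  rw [← hconj, hc, hc1, one_smul, prodMap_id]
  ext x
  simp

namespace LinearMap.BilinForm

theorem apply_mem_orthogonal_fixedSubmodule {B : LinearMap.BilinForm K V} {g : V →ₗ[K] V}
    (hg : ∀ x y, B (g x) (g y) = B x y) {x : V} (hx : x ∈ B.orthogonal g.fixedSubmodule) :
    g x ∈ B.orthogonal g.fixedSubmodule := by
  intro n hn
  rw [← mem_fixedSubmodule_iff.mp hn, hg]
  exact hx n hn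

theorem eq_id_of_det_eq_one_of_restrict_fixedSubmodule_nondegenerate [FiniteDimensional K V]
    {B : LinearMap.BilinForm K V} (hB : B.IsRefl) {g : V →ₗ[K] V}
    (hg : ∀ x y, B (g x) (g y) = B x y)
    (hN : (B.restrict g.fixedSubmodule).Nondegenerate)
    (hrank : finrank K V = finrank K g.fixedSubmodule + 1) (hdet : g.det = 1) :
    g = LinearMap.id := by
  have hcompl := isCompl_orthogonal_of_restrict_nondegenerate hB hN
  refine eq_id_of_det_eq_one_of_isCompl_fixedSubmodule hcompl
    (fun x hx => apply_mem_orthogonal_fixedSubmodule hg hx) ?_ hdet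
  have := Submodule.finrank_add_eq_of_isCompl hcompl
  omega

theorem IsSymm.nondegenerate_of_radical_eq_bot [Invertible (2 : K)]
    {B : LinearMap.BilinForm K V} (hB : B.IsSymm) (h : B.toQuadraticMap.radical = ⊥) :
    B.Nondegenerate := by
  rw [Nondegenerate, hB.isRefl.nondegenerate_iff_separatingLeft, separatingLeft_iff_ker_eq_bot,
    ← h, radical_eq_ker_associated, associated_left_inverse _ hB.eq]

end LinearMap.BilinForm

end LinearAlgebra

namespace QuadraticForm

variable {M : Type*} [AddCommGroup M] [Module ℝ M] [FiniteDimensional ℝ M]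

theorem exists_linearMap_le_norm_sq (Q : QuadraticForm ℝ M) :
    ∃ L : M →ₗ[ℝ] EuclideanSpace ℝ (Fin (sigPos Q)), ∀ x, Q x ≤ ‖L x‖ ^ 2 := by
  obtain ⟨w, ⟨e⟩⟩ := Q.equivalent_weightedSumSquares
  have hsig : sigPos Q = Nat.card {i | 0 < w i} := by
    rw [sigPos_of_equiv_weightedSumSquares ⟨e⟩, Nat.card_coe_set_eq]
  rw [hsig]
  set σ := (Finite.equivFin {i | 0 < w i}).symm
  refine ⟨(WithLp.linearEquiv 2 ℝ _).symm.toLinearMap ∘ₗ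
    LinearMap.pi (fun j => √(w (σ j)) • (LinearMap.proj (σ j : Fin _) ∘ₗ e.toLinearMap)),
    fun x => ?_⟩
  rw [EuclideanSpace.norm_sq_eq, ← e.map_app, weightedSumSquares_apply]
  have hσ : ∀ j, 0 < w (σ j) := fun j => (σ j).2
  calc ∑ i, w i • (e x i * e x i)
      ≤ ∑ i, if 0 < w i then w i * e x i ^ 2 else 0 := by
        gcongr with i
        split_ifs with hi
        · rw [smul_eq_mul, pow_two]
        · exact mul_nonpos_of_nonpos_of_nonneg (not_lt.mp hi) (mul_self_nonneg _)
    _ = ∑ i : {i | 0 < w i}, w i * e x i ^ 2 := by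
        rw [← Finset.sum_filter, Finset.sum_subtype _ (p := fun i => 0 < w i) (fun _ => by simp)]
        rfl
    _ = ∑ j, w (σ j) * e x (σ j) ^ 2 := (Equiv.sum_comp σ _).symm
    _ = _ := by
        refine Finset.sum_congr rfl fun j _ => ?_
        change _ = ‖√(w (σ j)) * e x (σ j)‖ ^ 2
        rw [Real.norm_eq_abs, sq_abs, mul_pow, Real.sq_sqrt (hσ j).le]

theorem one_le_sigNeg_of_apply_neg {𝕜 M : Type*} [Field 𝕜] [LinearOrder 𝕜]
    [IsStrictOrderedRing 𝕜] [AddCommGroup M] [Module 𝕜 M] [FiniteDimensional 𝕜 M]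
    {Q : QuadraticForm 𝕜 M} {x : M} (hx : Q x < 0) : 1 ≤ sigNeg Q := by
  have hx0 : x ≠ 0 := by
    rintro rfl
    simp at hx
  rw [← finrank_span_singleton (K := 𝕜) hx0]
  refine le_sigNeg_of_negDef _ fun ⟨v, hv⟩ hv0 => ?_
  obtain ⟨t, rfl⟩ := Submodule.mem_span_singleton.mp hv
  have ht : t ≠ 0 := by
    rintro rfl
    simp at hv0
  simpa [QuadraticMap.map_smul] using mul_neg_of_pos_of_neg (mul_self_pos.mpr ht) hx

end QuadraticForm

theorem finrank_le_of_antilipschitzWith_domRestrict {E F : Type*} [NormedAddCommGroup E]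
    [NormedSpace ℝ E] [FiniteDimensional ℝ E] [NormedAddCommGroup F] [NormedSpace ℝ F]
    [FiniteDimensional ℝ F] {U : Set E} (hU : IsOpen U) {p : U} {V : Set U} (hV : V ∈ 𝓝 p)
    {f : U → F} {K : ℝ≥0} (hf : AntilipschitzWith K (V.domRestrict f)) :
    finrank ℝ E ≤ finrank ℝ F := by
  have hdimV : dimH (univ : Set V) = finrank ℝ E := by
    have hiso : Isometry (Subtype.val ∘ Subtype.val : V → E) :=
      isometry_subtype_coe.comp isometry_subtype_coe
    rw [← hiso.dimH_image, image_univ, range_comp, Subtype.range_coe]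
    exact Real.dimH_of_mem_nhds (hU.isOpenMap_subtype_val.image_mem_nhds hV)
  have : (finrank ℝ E : ℝ≥0∞) ≤ finrank ℝ F := calc
    _ = dimH (univ : Set V) := hdimV.symm
    _ ≤ dimH (V.domRestrict f '' univ) := hf.le_dimH_image univ
    _ ≤ dimH (univ : Set F) := dimH_mono (subset_univ _)
    _ = finrank ℝ F := Real.dimH_univ_eq_finrank F
  exact_mod_cast this

section AntiDeSitter

variable {d : ℕ}

theorem bil_comm (x y : EuclideanSpace ℝ (Fin (d + 2))) : bil d x y = bil d y x :=
  Finset.sum_congr rfl fun _ _ => by ring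

theorem bil_add_left (x y z : EuclideanSpace ℝ (Fin (d + 2))) :
    bil d (x + y) z = bil d x z + bil d y z := by
  simp only [bil, PiLp.add_apply, mul_add, add_mul, Finset.sum_add_distrib]

theorem bil_smul_left (a : ℝ) (x y : EuclideanSpace ℝ (Fin (d + 2))) :
    bil d (a • x) y = a * bil d x y := by
  simp only [bil, PiLp.smul_apply, smul_eq_mul, Finset.mul_sum]
  exact Finset.sum_congr rfl fun _ _ => by ring

def bilForm (d : ℕ) : LinearMap.BilinForm ℝ (EuclideanSpace ℝ (Fin (d + 2))) :=
  LinearMap.mk₂ ℝ (bil d) bil_add_left bil_smul_left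
    (fun x y z => by rw [bil_comm, bil_add_left, bil_comm y, bil_comm z])
    (fun a x y => by rw [bil_comm, bil_smul_left, bil_comm y]; rfl)

@[simp] theorem bilForm_apply (x y : EuclideanSpace ℝ (Fin (d + 2))) :
    bilForm d x y = bil d x y :=
  rfl

theorem bilForm_isSymm : (bilForm d).IsSymm :=
  ⟨fun x y => bil_comm x y⟩

def quadForm (d : ℕ) : QuadraticForm ℝ (EuclideanSpace ℝ (Fin (d + 2))) :=
  (bilForm d).toQuadraticMap

theorem quadForm_apply (x : EuclideanSpace ℝ (Fin (d + 2))) : quadForm d x = quad d x :=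
  rfl

theorem quad_sub (x y : EuclideanSpace ℝ (Fin (d + 2))) :
    quad d (x - y) = quad d x + quad d y - 2 * bil d x y := by
  change bilForm d (x - y) (x - y) = _
  simp only [map_sub, LinearMap.sub_apply, bilForm_apply, bil_comm y x, quad]
  ring

theorem IsSpacelikeImmersion.exists_mem_nhds_sq_dist_le_quad_sub {H : Type*} [MetricSpace H]
    {i : H → EuclideanSpace ℝ (Fin (d + 2))} (hi : IsSpacelikeImmersion d i)
    (hAdS : ∀ p, quad d (i p) = -1) (p : H) :
    ∃ V ∈ 𝓝 p, ∃ c : ℝ, 0 < c ∧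
      ∀ p' ∈ V, ∀ p'' ∈ V, c * dist p' p'' ^ 2 ≤ quad d (i p' - i p'') := by
  obtain ⟨V, hV, c, hc, hbil⟩ := hi.2 p
  refine ⟨V, hV, 2 * c, by positivity, fun p' hp' p'' hp'' => ?_⟩
  rw [quad_sub, hAdS, hAdS]
  linarith [hbil p' hp' p'' hp'']

theorem IsSpacelikeImmersion.finrank_le_sigPos {E : Type*} [NormedAddCommGroup E]
    [NormedSpace ℝ E] [FiniteDimensional ℝ E] {U : Set E} (hU : IsOpen U) (hne : U.Nonempty)
    {φ : U → EuclideanSpace ℝ (Fin (d + 2))} (hφ : IsSpacelikeImmersion d φ)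
    (hAdS : ∀ p, quad d (φ p) = -1) {W : Submodule ℝ (EuclideanSpace ℝ (Fin (d + 2)))}
    (hW : ∀ p, φ p ∈ W) : finrank ℝ E ≤ sigPos ((quadForm d).restrict W) := by
  obtain ⟨p⟩ := hne.to_subtype
  obtain ⟨V, hV, c, hc, hquad⟩ := hφ.exists_mem_nhds_sq_dist_le_quad_sub hAdS p
  obtain ⟨L, hL⟩ := exists_linearMap_le_norm_sq ((quadForm d).restrict W)
  set f : U → EuclideanSpace ℝ (Fin _) := fun q => L ⟨φ q, hW q⟩
  have hsq : ∀ x y : V, c * dist x y ^ 2 ≤ dist (f x) (f y) ^ 2 := fun x y => calc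
    c * dist x y ^ 2 ≤ quad d (φ x - φ y) := hquad x x.2 y y.2
    _ = (quadForm d).restrict W (⟨φ x, hW x⟩ - ⟨φ y, hW y⟩) := rfl
    _ ≤ ‖L (⟨φ x, hW x⟩ - ⟨φ y, hW y⟩)‖ ^ 2 := hL _
    _ = dist (f x) (f y) ^ 2 := by rw [map_sub, dist_eq_norm]
  have hf : AntilipschitzWith (NNReal.sqrt (Real.toNNReal c))⁻¹ (V.domRestrict f) := by
    refine AntilipschitzWith.of_le_mul_dist fun x y => ?_
    rw [NNReal.coe_inv, Real.coe_sqrt, Real.coe_toNNReal _ hc.le, inv_mul_eq_div,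
      le_div_iff₀ (Real.sqrt_pos.2 hc), mul_comm, ← pow_le_pow_iff_left₀ (by positivity)
      dist_nonneg two_ne_zero, mul_pow, Real.sq_sqrt hc.le]
    exact hsq x y
  simpa using finrank_le_of_antilipschitzWith_domRestrict hU hV hf

end AntiDeSitter

theorem isometry_fixing_spacelike_immersion_is_id_general (d : ℕ)
    (U : Set (EuclideanSpace ℝ (Fin d))) (hUopen : IsOpen U) (hUne : U.Nonempty)
    (φ : U → EuclideanSpace ℝ (Fin (d + 2)))
    (hAdS : ∀ p, quad d (φ p) = -1)
    (hsp : IsSpacelikeImmersion d φ)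
    (g : EuclideanSpace ℝ (Fin (d + 2)) →ₗ[ℝ] EuclideanSpace ℝ (Fin (d + 2)))
    (hg : ∀ u v, bil d (g u) (g v) = bil d u v)
    (hdet : LinearMap.det g = 1)
    (hfix : ∀ p, g (φ p) = φ p) :
    g = LinearMap.id := by
  by_cases htop : g.fixedSubmodule = ⊤
  · exact LinearMap.fixedSubmodule_eq_top_iff.mp htop
  have hφN : ∀ p, φ p ∈ g.fixedSubmodule := hfix
  obtain ⟨p⟩ := hUne.to_subtype
  set Q := (quadForm d).restrict g.fixedSubmodule
  have hpos : d ≤ sigPos Q := by simpa using hsp.finrank_le_sigPos hUopen hUne hAdS hφN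
  have hneg : 1 ≤ sigNeg Q :=
    one_le_sigNeg_of_apply_neg (x := ⟨φ p, hφN p⟩) (by simp [Q, quadForm_apply, hAdS])
  have hdim : sigPos Q + sigNeg Q + finrank ℝ Q.radical = finrank ℝ g.fixedSubmodule :=
    sigPos_add_sigNeg_add_radical
  have hlt : finrank ℝ g.fixedSubmodule < d + 2 := by simpa using Submodule.finrank_lt htop
  have hrad : Q.radical = ⊥ := Submodule.finrank_eq_zero.mp (by omega)
  refine LinearMap.BilinForm.eq_id_of_det_eq_one_of_restrict_fixedSubmodule_nondegenerate
    bilForm_isSymm.isRefl hg ((bilForm_isSymm.restrict _).nondegenerate_of_radical_eq_bot hrad)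
    (by rw [finrank_euclideanSpace_fin]; omega) hdet

/-- an orientation-preserving linear isometry of the form ⟨·,·⟩
(i.e. preserving the bilinear form, with determinant 1) fixing pointwise the
image of a spacelike immersion of a nonempty open subset of ℝ^d is the
identity. -/
theorem isometry_fixing_spacelike_immersion_is_id (d : ℕ) (hd : 1 ≤ d)
    (U : Set (EuclideanSpace ℝ (Fin d))) (hUopen : IsOpen U) (hUne : U.Nonempty)
    (φ : U → EuclideanSpace ℝ (Fin (d + 2)))
    (hAdS : ∀ p, quad d (φ p) = -1)
    (hsp : IsSpacelikeImmersion d φ)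
    (g : EuclideanSpace ℝ (Fin (d + 2)) →ₗ[ℝ] EuclideanSpace ℝ (Fin (d + 2)))
    (hg : ∀ u v, bil d (g u) (g v) = bil d u v)
    (hdet : LinearMap.det g = 1)
    (hfix : ∀ p, g (φ p) = φ p) :
    g = LinearMap.id :=
  isometry_fixing_spacelike_immersion_is_id_general d U hUopen hUne φ hAdS hsp g hg hdet hfix
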